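/- Let V be a group and H ≤ V a subgroup that normally generates V. If H is free abelian of finite rank and the abelianization V/[V,V] is isomorphic to H (as abstract groups), then the quotient map V → V/[V,V] restricts to an isomorphism H → V/[V,V], and consequently H ∩ [V,V] is trivial. -/

import Mathlib

/-!
Since `V^ab` is abelian, the image of `H` in it is normal, and it normally generates the image
of `V`; so `H → V^ab` is onto. Composed with an isomorphism `V^ab ≅ H`, it becomes a surjective
endomorphism of a finitely generated `ℤ`-module, hence injective (finitely generated modules
over a commutative ring are Hopfian). Its kernel is `H ∩ [V,V]`.
-/

open Function

theorem Subgroup.map_eq_top_of_normalClosure_eq_top {G A : Type*} [Group G] [CommGroup A]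
    {f : G →* A} (hf : Surjective f) {H : Subgroup G}
    (hH : normalClosure (H : Set G) = ⊤) : H.map f = ⊤ := by
  have hmap := map_normalClosure (H : Set G) f hf
  rw [hH, map_top_of_surjective f hf] at hmap
  rw [hmap]
  exact (normalClosure_eq_self (H.map f)).symm

theorem MonoidHom.injective_of_surjective_of_mulEquiv {A B : Type*} [Group A] [CommGroup B]
    [Group.FG B] (e : A ≃* B) {f : A →* B} (hf : Surjective f) : Injective f := by
  have : Module.Finite ℤ (Additive B) := Module.Finite.iff_addGroup_fg.mpr inferInstance
  let g : Additive B →ₗ[ℤ] Additive B :=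
    (MonoidHom.toAdditive (f.comp e.symm.toMonoidHom)).toIntLinearMap
  have hg : Injective g :=
    OrzechProperty.injective_of_surjective_endomorphism g (hf.comp e.symm.surjective)
  exact (Injective.of_comp_iff' f e.symm.bijective).mp hg

theorem Abelianization.inf_commutator_eq_bot_of_injective {G : Type*} [Group G]
    {H : Subgroup G} (h : Injective (fun x : H => of (x : G))) : H ⊓ commutator G = ⊥ := by
  have hker : (of.comp H.subtype).ker = (commutator G).subgroupOf H := by
    rw [← MonoidHom.comap_ker, ker_of]
    rfl
  rw [(MonoidHom.ker_eq_bot_iff _).mpr h, eq_comm, Subgroup.subgroupOf_eq_bot] at hker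
  exact hker.symm.eq_bot

/-- If `H ≤ V` normally generates `V`, `H` is free abelian of finite rank `n`,
and the abelianization of `V` is also isomorphic to `ℤⁿ`, then the quotient map restricts to
an isomorphism `H → V/[V,V]`; consequently `H ∩ [V,V]` is trivial. -/
theorem stmt7 (V : Type*) [Group V] (H : Subgroup V) (n : ℕ)
    (hgen : Subgroup.normalClosure (H : Set V) = ⊤)
    (e₁ : H ≃* Multiplicative (Fin n → ℤ))
    (e₂ : Abelianization V ≃* Multiplicative (Fin n → ℤ)) :
    Function.Bijective (fun h : H => Abelianization.of (h : V)) ∧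
      H ⊓ commutator V = ⊥ := by
  have : Group.FG (Abelianization V) :=
    Group.fg_of_surjective (f := e₂.symm.toMonoidHom) e₂.symm.surjective
  have hsurj : Surjective (Abelianization.of.comp H.subtype) := by
    rw [← MonoidHom.range_eq_top, MonoidHom.range_comp, Subgroup.range_subtype]
    exact Subgroup.map_eq_top_of_normalClosure_eq_top QuotientGroup.mk_surjective hgen
  have hinj : Injective (Abelianization.of.comp H.subtype) :=
    MonoidHom.injective_of_surjective_of_mulEquiv (e₁.trans e₂.symm) hsurj
  exact ⟨⟨hinj, hsurj⟩, Abelianization.inf_commutator_eq_bot_of_injective hinj⟩
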